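/- Let U in SpSt(2n,2k) and Δ a tangent vector at U (U^+Δ = -Δ^+U). Set A = U^+Δ, H = Δ - UA, and suppose (1/4)H^+H - (1/2)A + I_{2k} is invertible. Then the Cayley retraction R_U(Δ) := -U + (H + 2U)((1/4)H^+H - (1/2)A + I_{2k})^{-1} satisfies R_U(Δ)^+ R_U(Δ) = I_{2k}, i.e., R_U(Δ) lies in SpSt(2n,2k). -/

import Mathlib

open Matrix

noncomputable section

/-- The standard symplectic matrix `J = [[0, I],[-I, 0]]` of size `2m`. -/
def Jmat (m : ℕ) : Matrix (Fin m ⊕ Fin m) (Fin m ⊕ Fin m) ℝ :=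
  Matrix.fromBlocks 0 1 (-1) 0

/-- The symplectic inverse `A⁺ = J₂ₖᵀ Aᵀ J₂ₙ` of a `2n × 2k` real matrix. -/
def sympInv {n k : ℕ} (A : Matrix (Fin n ⊕ Fin n) (Fin k ⊕ Fin k) ℝ) :
    Matrix (Fin k ⊕ Fin k) (Fin n ⊕ Fin n) ℝ :=
  (Jmat k)ᵀ * Aᵀ * Jmat n

/-!
Write `W = H + 2U` and let `S` be the matrix that is inverted. Since `U⁺H = 0` and `A⁺ = -A`,
`U⁺W = 2I` and `W⁺W = H⁺H + 4I = 2(S + S⁺)`. Expanding `R⁺R` for `R = -U + WS⁻¹` then gives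
`I - 2S⁻¹ - 2(S⁻¹)⁺ + 2(S⁻¹)⁺(S + S⁺)S⁻¹ = I`.
-/

lemma Jmat_mul_transpose (m : ℕ) : Jmat m * (Jmat m)ᵀ = 1 := by
  simp [Jmat, fromBlocks_transpose, fromBlocks_multiply, ← fromBlocks_one]

lemma transpose_Jmat_mul (m : ℕ) : (Jmat m)ᵀ * Jmat m = 1 := by
  simp [Jmat, fromBlocks_transpose, fromBlocks_multiply, ← fromBlocks_one]

lemma Jmat_mul_self (m : ℕ) : Jmat m * Jmat m = -1 := by
  simp [Jmat, fromBlocks_multiply, ← fromBlocks_one, fromBlocks_neg]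

section sympInv

variable {n m k : ℕ}

lemma sympInv_mul (A : Matrix (Fin n ⊕ Fin n) (Fin m ⊕ Fin m) ℝ)
    (B : Matrix (Fin m ⊕ Fin m) (Fin k ⊕ Fin k) ℝ) :
    sympInv (A * B) = sympInv B * sympInv A := by
  simp only [sympInv, transpose_mul, Matrix.mul_assoc]
  rw [← Matrix.mul_assoc (Jmat m), Jmat_mul_transpose, Matrix.one_mul]

lemma sympInv_sympInv (A : Matrix (Fin n ⊕ Fin n) (Fin k ⊕ Fin k) ℝ) :
    sympInv (sympInv A) = A := by
  have hJ : (Jmat n)ᵀ * (Jmat n)ᵀ = -1 := by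
    rw [← transpose_mul, Jmat_mul_self, transpose_neg, transpose_one]
  simp only [sympInv, transpose_mul, transpose_transpose, Matrix.mul_assoc]
  rw [Jmat_mul_self, ← Matrix.mul_assoc (Jmat n)ᵀ, hJ]
  simp

lemma sympInv_one : sympInv (1 : Matrix (Fin k ⊕ Fin k) (Fin k ⊕ Fin k) ℝ) = 1 := by
  simp [sympInv, transpose_Jmat_mul]

lemma sympInv_add (A B : Matrix (Fin n ⊕ Fin n) (Fin k ⊕ Fin k) ℝ) :
    sympInv (A + B) = sympInv A + sympInv B := by
  simp [sympInv, Matrix.add_mul, Matrix.mul_add]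

lemma sympInv_neg (A : Matrix (Fin n ⊕ Fin n) (Fin k ⊕ Fin k) ℝ) :
    sympInv (-A) = -sympInv A := by
  simp [sympInv]

lemma sympInv_sub (A B : Matrix (Fin n ⊕ Fin n) (Fin k ⊕ Fin k) ℝ) :
    sympInv (A - B) = sympInv A - sympInv B := by
  simp [sub_eq_add_neg, sympInv_add, sympInv_neg]

lemma sympInv_smul {R : Type*} [Monoid R] [DistribMulAction R ℝ] [IsScalarTower R ℝ ℝ]
    [SMulCommClass R ℝ ℝ] (c : R) (A : Matrix (Fin n ⊕ Fin n) (Fin k ⊕ Fin k) ℝ) :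
    sympInv (c • A) = c • sympInv A := by
  rw [sympInv, transpose_smul, Matrix.mul_smul, Matrix.smul_mul, sympInv]

theorem sympInv_cayley_mul_self {U W : Matrix (Fin n ⊕ Fin n) (Fin k ⊕ Fin k) ℝ}
    {S : Matrix (Fin k ⊕ Fin k) (Fin k ⊕ Fin k) ℝ} (hS : IsUnit S)
    (hU : sympInv U * U = 1) (hUW : sympInv U * W = (2 : ℝ) • 1)
    (hWW : sympInv W * W = (2 : ℝ) • (S + sympInv S)) :
    sympInv (-U + W * S⁻¹) * (-U + W * S⁻¹) = 1 := by
  have hWU : sympInv W * U = (2 : ℝ) • 1 := by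
    rw [← sympInv_sympInv (sympInv W * U), sympInv_mul, sympInv_sympInv, hUW,
      sympInv_smul, sympInv_one]
  have hSS : S * S⁻¹ = 1 := mul_nonsing_inv S ((isUnit_iff_isUnit_det S).mp hS)
  have hTS : sympInv S⁻¹ * sympInv S = 1 := by
    rw [← sympInv_mul, hSS, sympInv_one]
  calc sympInv (-U + W * S⁻¹) * (-U + W * S⁻¹)
      = sympInv U * U - sympInv U * W * S⁻¹ - sympInv S⁻¹ * (sympInv W * U)
          + sympInv S⁻¹ * (sympInv W * W) * S⁻¹ := by
        simp only [sympInv_add, sympInv_neg, sympInv_mul, Matrix.add_mul, Matrix.mul_add,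
          Matrix.neg_mul, Matrix.mul_neg, Matrix.mul_assoc]
        abel
    _ = 1 - (2 : ℝ) • S⁻¹ - (2 : ℝ) • sympInv S⁻¹
          + (2 : ℝ) • (sympInv S⁻¹ * S * S⁻¹ + sympInv S⁻¹ * sympInv S * S⁻¹) := by
        rw [hU, hUW, hWU, hWW]
        simp only [Matrix.mul_smul, Matrix.smul_mul, Matrix.mul_add, Matrix.add_mul,
          Matrix.mul_one, Matrix.one_mul]
    _ = 1 := by
        rw [Matrix.mul_assoc _ S, hSS, hTS, Matrix.mul_one, Matrix.one_mul]; module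

end sympInv

theorem stmt_11 (n k : ℕ) (U Δ : Matrix (Fin n ⊕ Fin n) (Fin k ⊕ Fin k) ℝ)
    (hU : sympInv U * U = 1) (hΔ : sympInv U * Δ = -(sympInv Δ * U))
    (A : Matrix (Fin k ⊕ Fin k) (Fin k ⊕ Fin k) ℝ) (hA : A = sympInv U * Δ)
    (H : Matrix (Fin n ⊕ Fin n) (Fin k ⊕ Fin k) ℝ) (hH : H = Δ - U * A)
    (hInv : IsUnit ((1/4 : ℝ) • (sympInv H * H) - (1/2 : ℝ) • A + 1)) :
    sympInv (-U + (H + 2 • U) * ((1/4 : ℝ) • (sympInv H * H) - (1/2 : ℝ) • A + 1)⁻¹)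
      * (-U + (H + 2 • U) * ((1/4 : ℝ) • (sympInv H * H) - (1/2 : ℝ) • A + 1)⁻¹) = 1 := by
  have hA_skew : sympInv A = -A := by
    rw [hA, sympInv_mul, sympInv_sympInv, hΔ, neg_neg]
  have hUH : sympInv U * H = 0 := by
    rw [hH, Matrix.mul_sub, ← Matrix.mul_assoc, hU, ← hA, Matrix.one_mul, sub_self]
  have hHU : sympInv H * U = 0 := by
    rw [← sympInv_sympInv (sympInv H * U), sympInv_mul, sympInv_sympInv, hUH]
    simp [sympInv]
  refine sympInv_cayley_mul_self hInv hU ?_ ?_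
  · rw [Matrix.mul_add, hUH, Matrix.mul_smul, hU, zero_add]
    exact (ofNat_smul_eq_nsmul ℝ 2 _).symm
  · simp only [sympInv_add, sympInv_sub, sympInv_smul, sympInv_mul, sympInv_sympInv,
      sympInv_one, hA_skew, Matrix.add_mul, Matrix.mul_add, Matrix.smul_mul, Matrix.mul_smul,
      hUH, hHU, hU]
    module
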